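/- arXiv:1703.04511 — 3 statements merged into one kernel-verified Lean document; each statement's English description precedes it below -/
import Mathlib

section
/- For every positive integer m, the sum over l ≥ 0 of (1/2)^(2l+m) · C(l+m-1, l) equals 1, where C(n,k) = (n+k)!·(n-k+1)/(k!·(n+1)!) is the (n,k) entry of the Catalan triangle. -/
/-!
By the reflection principle, the walks of length `2N + m` that have not yet reached `m` are as many
as all walks of that length ending in `[-m, m)`, namely `survivalCount m N`. Of their
`4 * survivalCount m N` two-step extensions exactly `C(N + m, N + 1)` reach `m` for the first time,
so the partial sums of the series are `1 - survivalCount m N / 2 ^ (2N + m)`. The tail is at most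
`m 2^m centralBinom (N + m) / 4 ^ (N + m)`, which tends to `0` because
`centralBinom n ^ 2 * (2n + 1) ≤ 16 ^ n`.
-/

/-- The Catalan triangle entry `C(n,k) = (n+k)! (n-k+1) / (k! (n+1)!)`, as a real number. -/
noncomputable def catalanTriangle (n k : ℕ) : ℝ :=
  ((n + k).factorial * (n - k + 1) : ℕ) / ((k.factorial * (n + 1).factorial : ℕ) : ℝ)

open Finset Filter Topology

lemma Nat.sum_range_choose_succ_add_succ (n s m : ℕ) :
    ∑ i ∈ range m, (n + 1).choose (s + 1 + i)
      = ∑ i ∈ range m, n.choose (s + i) + ∑ i ∈ range m, n.choose (s + 1 + i) := by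
  rw [← sum_add_distrib]
  refine sum_congr rfl fun i _ => ?_
  rw [add_right_comm, Nat.choose_succ_succ']

lemma Nat.sum_range_choose_succ_add_add (n s m : ℕ) :
    ∑ i ∈ range m, n.choose (s + 1 + i) + n.choose s
      = ∑ i ∈ range m, n.choose (s + i) + n.choose (s + m) := by
  rw [← sum_range_succ (fun i => n.choose (s + i)), sum_range_succ', add_zero]
  simp only [add_assoc, add_comm 1]

lemma Nat.sum_range_choose_add_eq_of_add_add_eq {n a b m : ℕ} (h : a + b + m = n + 1) :
    ∑ i ∈ range m, n.choose (a + i) = ∑ i ∈ range m, n.choose (b + i) := by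
  rw [← sum_range_reflect (fun i => n.choose (b + i)) m]
  refine sum_congr rfl fun i hi => Nat.choose_symm_of_eq_add ?_
  have := mem_range.mp hi
  omega

lemma Nat.centralBinom_sq_mul_le_sixteen_pow (n : ℕ) :
    n.centralBinom ^ 2 * (2 * n + 1) ≤ 16 ^ n := by
  induction n with
  | zero => simp
  | succ n ih =>
    refine Nat.le_of_mul_le_mul_left ?_ (by positivity : 0 < (n + 1) ^ 2)
    calc (n + 1) ^ 2 * ((n + 1).centralBinom ^ 2 * (2 * (n + 1) + 1))
        = ((n + 1) * (n + 1).centralBinom) ^ 2 * (2 * n + 3) := by ring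
      _ = (n.centralBinom ^ 2 * (2 * n + 1)) * (4 * ((2 * n + 1) * (2 * n + 3))) := by
          rw [Nat.succ_mul_centralBinom_succ]; ring
      _ ≤ 16 ^ n * (16 * (n + 1) ^ 2) := Nat.mul_le_mul ih (by nlinarith)
      _ = (n + 1) ^ 2 * 16 ^ (n + 1) := by ring

lemma tendsto_centralBinom_div_four_pow :
    Tendsto (fun n : ℕ => (n.centralBinom : ℝ) / 4 ^ n) atTop (𝓝 0) := by
  have hsq (n : ℕ) : ((n.centralBinom : ℝ) / 4 ^ n) ^ 2 ≤ 1 / (2 * n + 1) := by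
    have h16 : ((4 : ℝ) ^ n) ^ 2 = 16 ^ n := by rw [← pow_mul, mul_comm, pow_mul]; norm_num
    rw [div_pow, h16, div_le_div_iff₀ (by positivity) (by positivity), one_mul]
    exact_mod_cast Nat.centralBinom_sq_mul_le_sixteen_pow n
  have hlim : Tendsto (fun n : ℕ => 1 / (2 * (n : ℝ) + 1)) atTop (𝓝 0) :=
    tendsto_const_nhds.div_atTop <|
      (tendsto_natCast_atTop_atTop.const_mul_atTop two_pos).atTop_add tendsto_const_nhds
  have hsqrt := (Real.continuous_sqrt.tendsto 0).comp
    (squeeze_zero (fun n => sq_nonneg _) hsq hlim)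
  rw [Real.sqrt_zero] at hsqrt
  exact hsqrt.congr fun n => Real.sqrt_sq (by positivity)

lemma catalanTriangle_nonneg (n k : ℕ) : 0 ≤ catalanTriangle n k := by
  unfold catalanTriangle
  positivity

lemma catalanTriangle_zero_right (n : ℕ) : catalanTriangle n 0 = 1 := by
  rw [catalanTriangle, div_eq_one_iff_eq (by positivity)]
  simp [Nat.factorial_succ, mul_comm]

lemma catalanTriangle_succ_right {n k : ℕ} (hk : k < n) :
    catalanTriangle n (k + 1) = ((n + k + 1).choose (k + 1) : ℝ) - (n + k + 1).choose k := by
  have hsucc : ((n + k + 1).choose (k + 1) : ℝ) * (k + 1) = (n + k + 1).choose k * (n + 1) := by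
    have := Nat.choose_succ_right_eq (n + k + 1) k
    rw [show n + k + 1 - k = n + 1 by omega] at this
    exact_mod_cast this
  have hfact : ((n + k + 1).choose k : ℝ) * (n + 1).factorial * k.factorial
      = (n + k + 1).factorial := by
    have := Nat.add_choose_mul_factorial_mul_factorial (n + 1) k
    rw [show n + 1 + k = n + k + 1 by omega] at this
    exact_mod_cast this
  rw [catalanTriangle, div_eq_iff (by positivity), show n + (k + 1) = n + k + 1 by omega,
    show n - (k + 1) + 1 = n - k by omega, Nat.factorial_succ k]
  push_cast [Nat.cast_sub hk.le]
  linear_combination (k - n) * hfact - (k.factorial * (n + 1).factorial) * hsucc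

def survivalCount (m N : ℕ) : ℕ := ∑ i ∈ range m, (2 * N + m).choose (N + i)

lemma survivalCount_zero (m : ℕ) : survivalCount m 0 + 1 = 2 ^ m := by
  rw [← Nat.sum_range_choose, sum_range_succ, Nat.choose_self]
  simp [survivalCount]

lemma survivalCount_succ (m N : ℕ) :
    survivalCount m (N + 1) + (2 * N + m + 1).choose (N + 1)
      = 4 * survivalCount m N + (2 * N + m + 1).choose N := by
  set n := 2 * N + m
  have hsymm : ∑ i ∈ range m, n.choose (N + 1 + i) = survivalCount m N :=
    (Nat.sum_range_choose_add_eq_of_add_add_eq (by omega)).symm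
  have hsplit : survivalCount m (N + 1) = ∑ i ∈ range m, (n + 1).choose (N + i)
      + ∑ i ∈ range m, (n + 1).choose (N + 1 + i) := by
    rw [survivalCount, show 2 * (N + 1) + m = n + 1 + 1 by omega,
      ← Nat.sum_range_choose_succ_add_succ]
  have hupper : ∑ i ∈ range m, (n + 1).choose (N + 1 + i) = 2 * survivalCount m N := by
    rw [Nat.sum_range_choose_succ_add_succ, hsymm, two_mul]
    rfl
  have hshift := Nat.sum_range_choose_succ_add_add (n + 1) N m
  have hend : (n + 1).choose (N + m) = (n + 1).choose (N + 1) :=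
    Nat.choose_symm_of_eq_add (by omega)
  omega

lemma survivalCount_le (m N : ℕ) : survivalCount m N ≤ m * (N + m).centralBinom := by
  calc survivalCount m N ≤ ∑ _i ∈ range m, (N + m).centralBinom :=
        sum_le_sum fun i _ =>
          (Nat.choose_le_choose _ (by omega)).trans (Nat.choose_le_centralBinom _ _)
    _ = m * (N + m).centralBinom := by simp

lemma tendsto_survivalCount_div_two_pow (m : ℕ) :
    Tendsto (fun N : ℕ => (survivalCount m N : ℝ) / 2 ^ (2 * N + m)) atTop (𝓝 0) := by
  have hbound (N : ℕ) : (survivalCount m N : ℝ) / 2 ^ (2 * N + m)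
      ≤ m * 2 ^ m * ((N + m).centralBinom / 4 ^ (N + m)) := by
    have h4 : (4 : ℝ) ^ (N + m) = 2 ^ (2 * N + m) * 2 ^ m := by
      rw [← pow_add, show (4 : ℝ) = 2 ^ 2 by norm_num, ← pow_mul]
      ring_nf
    have hle : (survivalCount m N : ℝ) ≤ m * (N + m).centralBinom := by
      exact_mod_cast survivalCount_le m N
    rw [h4, div_le_iff₀ (by positivity)]
    field_simp
    linarith
  have hlim := (tendsto_centralBinom_div_four_pow.comp (tendsto_add_atTop_nat m)).const_mul
    ((m : ℝ) * 2 ^ m)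
  rw [mul_zero] at hlim
  exact squeeze_zero (fun N => by positivity) hbound hlim

lemma sum_range_succ_half_pow_mul_catalanTriangle {m : ℕ} (hm : 1 ≤ m) (N : ℕ) :
    ∑ l ∈ range (N + 1), (1 / 2 : ℝ) ^ (2 * l + m) * catalanTriangle (l + m - 1) l
      = 1 - survivalCount m N / 2 ^ (2 * N + m) := by
  induction N with
  | zero =>
    have h : (survivalCount m 0 : ℝ) + 1 = 2 ^ m := by exact_mod_cast survivalCount_zero m
    rw [sum_range_one, Nat.zero_add, catalanTriangle_zero_right, mul_one, div_pow, one_pow]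
    field_simp
    linarith
  | succ N ih =>
    have hrec : (survivalCount m (N + 1) : ℝ) + (2 * N + m + 1).choose (N + 1)
        = 4 * survivalCount m N + (2 * N + m + 1).choose N := by
      exact_mod_cast survivalCount_succ m N
    rw [sum_range_succ, ih, show N + 1 + m - 1 = N + m by omega,
      catalanTriangle_succ_right (by omega : N < N + m),
      show N + m + N + 1 = 2 * N + m + 1 by omega, div_pow, one_pow,
      show 2 * (N + 1) + m = 2 * N + m + 2 by omega, pow_add _ _ 2]
    field_simp
    linear_combination hrec

/-- For every positive integer `m`, `∑_{l≥0} (1/2)^(2l+m) C(l+m-1,l) = 1`. -/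
theorem catalan_triangle_sum_eq_one (m : ℕ) (hm : 1 ≤ m) :
    ∑' l : ℕ, (1 / 2 : ℝ) ^ (2 * l + m) * catalanTriangle (l + m - 1) l = 1 := by
  have hnonneg (l : ℕ) : 0 ≤ (1 / 2 : ℝ) ^ (2 * l + m) * catalanTriangle (l + m - 1) l :=
    mul_nonneg (by positivity) (catalanTriangle_nonneg _ _)
  refine ((hasSum_iff_tendsto_nat_of_nonneg hnonneg 1).mpr ?_).tsum_eq
  rw [← tendsto_add_atTop_iff_nat 1]
  simp only [sum_range_succ_half_pow_mul_catalanTriangle hm]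
  simpa using tendsto_const_nhds.sub (tendsto_survivalCount_div_two_pow m)
end

section
/- For all integers l ≥ 1 and m ≥ 1, the quantity (1/2)^(2l+m) · C(l+m-1, l) is at least 2^{-m} / (3√6) · 1/l^{3/2}, where C(n,k) = (n+k)!(n-k+1)/(k!(n+1)!). -/
/-!
For fixed `k` the entry `C(n, k)` is nondecreasing in `n ≥ k`, so `C(l + m - 1, l) ≥ C(l, l)`,
the Catalan number `centralBinom l / (l + 1)`. The induction `16 ^ n ≤ 4 n · centralBinom n ^ 2`
gives `centralBinom l ≥ 4 ^ l / (2 √l)`, hence `catalan l ≥ 4 ^ l / (3 √6 · l ^ (3/2))`, and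
`(1/2) ^ (2l + m) = 2 ^ (-m) · 4 ^ (-l)`.
-/

namespace Nat

theorem four_pow_sq_le_four_mul_mul_centralBinom_sq {n : ℕ} (hn : 0 < n) :
    (4 ^ n) ^ 2 ≤ 4 * n * centralBinom n ^ 2 := by
  induction n, hn using Nat.le_induction with
  | base => simp [centralBinom, choose]
  | succ n _ ih =>
    have hstep :
        (n + 1) ^ 2 * centralBinom (n + 1) ^ 2 = 4 * (2 * n + 1) ^ 2 * centralBinom n ^ 2 := by
      rw [← mul_pow, succ_mul_centralBinom_succ]; ring
    have hpoly : 4 * n * (n + 1) ≤ (2 * n + 1) ^ 2 := by nlinarith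
    refine Nat.le_of_mul_le_mul_left ?_ (by positivity : 0 < (n + 1) ^ 2)
    calc (n + 1) ^ 2 * (4 ^ (n + 1)) ^ 2 = 16 * (n + 1) ^ 2 * (4 ^ n) ^ 2 := by ring
      _ ≤ 16 * (n + 1) ^ 2 * (4 * n * centralBinom n ^ 2) := by gcongr
      _ = 16 * (n + 1) * (4 * n * (n + 1)) * centralBinom n ^ 2 := by ring
      _ ≤ 16 * (n + 1) * (2 * n + 1) ^ 2 * centralBinom n ^ 2 := by gcongr
      _ = 4 * (n + 1) * ((n + 1) ^ 2 * centralBinom (n + 1) ^ 2) := by rw [hstep]; ring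
      _ = (n + 1) ^ 2 * (4 * (n + 1) * centralBinom (n + 1) ^ 2) := by ring

theorem four_pow_le_two_mul_sqrt_mul_centralBinom {n : ℕ} (hn : 0 < n) :
    (4 : ℝ) ^ n ≤ 2 * √n * centralBinom n := by
  refine (pow_le_pow_iff_left₀ (by positivity) (by positivity) two_ne_zero).mp ?_
  rw [mul_pow, mul_pow, Real.sq_sqrt n.cast_nonneg]
  exact_mod_cast (four_pow_sq_le_four_mul_mul_centralBinom_sq hn).trans_eq (by ring)

end Nat

open Nat

theorem four_pow_le_mul_rpow_mul_catalan {n : ℕ} (hn : 0 < n) :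
    (4 : ℝ) ^ n ≤ 3 * √6 * (n : ℝ) ^ ((3 : ℝ) / 2) * catalan n := by
  have hn1 : (1 : ℝ) ≤ n := by exact_mod_cast hn
  have hsqrt6 : (2 : ℝ) ≤ √6 := by rw [Real.le_sqrt] <;> norm_num
  have hrpow : (n : ℝ) ^ ((3 : ℝ) / 2) = n * √n := by
    rw [show (3 : ℝ) / 2 = 1 + 1 / 2 by norm_num, Real.rpow_add (by positivity), Real.rpow_one,
      Real.sqrt_eq_rpow]
  have hcatalan : (centralBinom n : ℝ) = (n + 1) * catalan n := by
    exact_mod_cast (succ_mul_catalan_eq_centralBinom n).symm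
  calc (4 : ℝ) ^ n ≤ 2 * √n * centralBinom n := four_pow_le_two_mul_sqrt_mul_centralBinom hn
    _ = 2 * (n + 1) * √n * catalan n := by rw [hcatalan]; ring
    _ ≤ 4 * n * √n * catalan n := by gcongr ?_ * _ * _; linarith
    _ = 4 * (n * √n) * catalan n := by ring
    _ ≤ 3 * √6 * (n * √n) * catalan n := by gcongr; linarith
    _ = 3 * √6 * (n : ℝ) ^ ((3 : ℝ) / 2) * catalan n := by rw [hrpow]

theorem catalanTriangle_add_left (k a : ℕ) :
    catalanTriangle (k + a) k =
      (2 * k + a).factorial * (a + 1) / (k.factorial * (k + a + 1).factorial) := by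
  rw [catalanTriangle, Nat.add_sub_cancel_left, show k + a + k = 2 * k + a by ring]
  push_cast; ring

theorem catalanTriangle_self (n : ℕ) : catalanTriangle n n = catalan n := by
  have hcatalan : (centralBinom n : ℝ) = (n + 1) * catalan n := by
    exact_mod_cast (succ_mul_catalan_eq_centralBinom n).symm
  rw [centralBinom_eq_two_mul_choose, Nat.cast_choose ℝ (by omega : n ≤ 2 * n),
    show 2 * n - n = n by omega] at hcatalan
  have h := catalanTriangle_add_left n 0
  simp only [add_zero, Nat.cast_zero, zero_add, mul_one] at h
  rw [h, Nat.factorial_succ, eq_comm,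
    ← mul_div_cancel_left₀ (catalan n : ℝ) (by positivity : (n : ℝ) + 1 ≠ 0),
    ← hcatalan]
  push_cast
  field_simp

theorem catalanTriangle_le_succ {n k : ℕ} (hk : k ≤ n) :
    catalanTriangle n k ≤ catalanTriangle (n + 1) k := by
  obtain ⟨a, rfl⟩ := Nat.exists_eq_add_of_le hk
  rw [add_assoc, catalanTriangle_add_left, catalanTriangle_add_left,
    show 2 * k + (a + 1) = 2 * k + a + 1 by ring, show k + (a + 1) + 1 = k + a + 1 + 1 by ring,
    Nat.factorial_succ (2 * k + a), Nat.factorial_succ (k + a + 1),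
    div_le_div_iff₀ (by positivity) (by positivity)]
  push_cast
  have hkey : ((a : ℝ) + 1) * (k + a + 1 + 1) ≤ (2 * k + a + 1) * (a + 1 + 1) := by nlinarith
  calc _ = ((2 * k + a).factorial * k.factorial * (k + a + 1).factorial : ℝ) *
          ((a + 1) * (k + a + 1 + 1)) := by ring
    _ ≤ ((2 * k + a).factorial * k.factorial * (k + a + 1).factorial : ℝ) *
          ((2 * k + a + 1) * (a + 1 + 1)) := by gcongr
    _ = _ := by ring

theorem catalan_le_catalanTriangle {n k : ℕ} (hk : k ≤ n) :
    (catalan k : ℝ) ≤ catalanTriangle n k := by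
  induction n, hk using Nat.le_induction with
  | base => rw [catalanTriangle_self]
  | succ n hk ih => exact ih.trans (catalanTriangle_le_succ hk)

/-- For all `l, m ≥ 1`, `(1/2)^(2l+m) C(l+m-1,l) ≥ 2^{-m}/(3√6) · 1/l^{3/2}`. -/
theorem catalan_triangle_lower_bound (l m : ℕ) (hl : 1 ≤ l) (hm : 1 ≤ m) :
    (1 / 2 : ℝ) ^ m / (3 * Real.sqrt 6) * (1 / (l : ℝ) ^ ((3 : ℝ) / 2)) ≤
      (1 / 2 : ℝ) ^ (2 * l + m) * catalanTriangle (l + m - 1) l := by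
  have hcatalan := four_pow_le_mul_rpow_mul_catalan hl
  have htriangle := catalan_le_catalanTriangle (show l ≤ l + m - 1 by omega)
  have hhalf : (1 / 2 : ℝ) ^ (2 * l + m) = (1 / 2) ^ m / 4 ^ l := by
    rw [pow_add, pow_mul, div_eq_mul_inv _ ((4 : ℝ) ^ l), ← inv_pow]; norm_num; ring
  calc (1 / 2 : ℝ) ^ m / (3 * √6) * (1 / (l : ℝ) ^ ((3 : ℝ) / 2))
      = (1 / 2) ^ m / 4 ^ l * (4 ^ l / (3 * √6 * (l : ℝ) ^ ((3 : ℝ) / 2))) := by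
        field_simp
    _ ≤ (1 / 2) ^ m / 4 ^ l * catalan l := by
        gcongr; rwa [div_le_iff₀ (by positivity), mul_comm]
    _ ≤ (1 / 2 : ℝ) ^ (2 * l + m) * catalanTriangle (l + m - 1) l := by
        rw [hhalf]; gcongr
end

section
/- Let P₀ and P be stochastic matrices on a finite state space with P = P₀ + ε ΔP, where P is ergodic (irreducible aperiodic) with stationary measure π, and π₀ is a stationary measure of P₀. If D = Σ_{j≥0} ΔP · P₀^j converges and the series Σ_{k≥0} ε^k π₀ D^k converges absolutely, then π = Σ_{k=0}^{∞} ε^k π^{(k)} where π^{(k)} = π₀ D^k. -/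
/-!
Let `S = ∑ₖ εᵏ π₀ Dᵏ`. Shifting indices gives `S = π₀ + ε S D` and `D = ΔP + D P₀`, which
with `π₀ P₀ = π₀` make `S` a fixed point of `P₀ + ε ΔP`. Every term `ΔP P₀ʲ` has the row sums
of `ΔP`, so convergence of `D` forces them to vanish; hence `D 𝟙 = 0` and `S` has mass `1`.
The fixed points of `P` of mass zero vanish: such a `v ≠ 0` has entries of both signs, so for
the positive matrix `Q = Pᴺ` we get `|v| = |v Q| < |v| Q` entrywise, contradicting `Q 𝟙 = 𝟙`.
-/

open Matrix

theorem abs_sum_lt_sum_abs_of_pos_of_neg {ι R : Type*} [AddCommGroup R] [LinearOrder R]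
    [IsOrderedAddMonoid R] {s : Finset ι} {f : ι → R} {a b : ι} (ha : a ∈ s) (hb : b ∈ s)
    (hfa : 0 < f a) (hfb : f b < 0) : |∑ i ∈ s, f i| < ∑ i ∈ s, |f i| := by
  rw [abs_lt, neg_lt, ← Finset.sum_neg_distrib]
  exact ⟨Finset.sum_lt_sum (fun i _ => neg_le_abs (f i))
      ⟨a, ha, (neg_neg_of_pos hfa).trans (abs_pos.2 hfa.ne')⟩,
    Finset.sum_lt_sum (fun i _ => le_abs_self (f i)) ⟨b, hb, hfb.trans (abs_pos.2 hfb.ne)⟩⟩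

theorem tsum_mul_pow_eq_add {R : Type*} [Ring R] [TopologicalSpace R]
    [IsTopologicalRing R] [T2Space R] {A B : R}
    (h : Summable fun k : ℕ => B * A ^ k) :
    ∑' k : ℕ, B * A ^ k = B + (∑' k : ℕ, B * A ^ k) * A := by
  rw [← h.tsum_mul_right, h.tsum_eq_zero_add]
  simp [pow_succ, mul_assoc]

namespace Matrix

section Semiring

variable {n R : Type*} [Fintype n] [Semiring R]

theorem mulVec_one_eq_one_iff {M : Matrix n n R} : M *ᵥ 1 = 1 ↔ ∀ i, ∑ j, M i j = 1 := by
  simp [funext_iff, mulVec, dotProduct]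

theorem pow_mulVec_eq_self [DecidableEq n] {M : Matrix n n R} {w : n → R} (h : M *ᵥ w = w)
    (k : ℕ) : M ^ k *ᵥ w = w := by
  induction k with
  | zero => rw [pow_zero, one_mulVec]
  | succ k ih => rw [pow_succ, ← mulVec_mulVec, h, ih]

theorem vecMul_pow_eq_self [DecidableEq n] {M : Matrix n n R} {v : n → R} (h : v ᵥ* M = v)
    (k : ℕ) : v ᵥ* M ^ k = v := by
  induction k with
  | zero => rw [pow_zero, vecMul_one]
  | succ k ih => rw [pow_succ, ← vecMul_vecMul, ih, h]

end Semiring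

section Uniqueness

variable {n R : Type*} [Fintype n] [CommRing R] [LinearOrder R] [IsStrictOrderedRing R]

theorem eq_zero_of_vecMul_eq_self_of_pos {Q : Matrix n n R} (hpos : ∀ i j, 0 < Q i j)
    (hQ : Q *ᵥ 1 = 1) {v : n → R} (hv : v ᵥ* Q = v) (hsum : ∑ i, v i = 0) : v = 0 := by
  by_contra hne
  obtain ⟨c, hc⟩ : ∃ c, v c ≠ 0 := by simpa [funext_iff] using hne
  obtain ⟨a, -, ha⟩ := Finset.exists_pos_of_sum_zero_of_exists_nonzero v hsum
    ⟨c, Finset.mem_univ c, hc⟩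
  obtain ⟨b, -, hb⟩ := Finset.exists_pos_of_sum_zero_of_exists_nonzero (-v)
    (by simp [Finset.sum_neg_distrib, hsum]) ⟨c, Finset.mem_univ c, neg_ne_zero.2 hc⟩
  have hstrict : ∀ i, |v i| < (|v| ᵥ* Q) i := fun i =>
    calc |v i| = |∑ j, v j * Q j i| := by rw [← congrFun hv i]; rfl
      _ < ∑ j, |v j * Q j i| :=
        abs_sum_lt_sum_abs_of_pos_of_neg (Finset.mem_univ a) (Finset.mem_univ b)
          (mul_pos ha (hpos a i)) (mul_neg_of_neg_of_pos (neg_pos.1 hb) (hpos b i))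
      _ = (|v| ᵥ* Q) i := by
        simp [vecMul, dotProduct, abs_mul, abs_of_pos (hpos _ i)]
  have := Finset.sum_lt_sum_of_nonempty ⟨a, Finset.mem_univ a⟩ fun i _ => hstrict i
  rw [← dotProduct_one, ← dotProduct_one, ← dotProduct_mulVec, hQ] at this
  exact this.false

theorem eq_of_vecMul_eq_self_of_pow_pos [DecidableEq n] {P : Matrix n n R} (hP : P *ᵥ 1 = 1)
    {N : ℕ} (hN : ∀ i j, 0 < (P ^ N) i j) {v w : n → R} (hv : v ᵥ* P = v) (hw : w ᵥ* P = w)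
    (hsum : ∑ i, v i = ∑ i, w i) : v = w :=
  sub_eq_zero.1 <| eq_zero_of_vecMul_eq_self_of_pos hN (pow_mulVec_eq_self hP N)
    (vecMul_pow_eq_self (by rw [sub_vecMul, hv, hw]) N)
    (by simp [Finset.sum_sub_distrib, hsum])

end Uniqueness

section Series

variable {n R : Type*} [Fintype n] [Ring R] [TopologicalSpace R] [IsTopologicalRing R]
  [T2Space R]

theorem tsum_vecMul {ι m : Type*} {f : ι → n → R} (hf : Summable f) (M : Matrix n m R) :
    (∑' i, f i) ᵥ* M = ∑' i, f i ᵥ* M :=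
  hf.map_tsum M.vecMulLinear (continuous_id.matrix_vecMul continuous_const)

theorem tsum_mulVec {ι m : Type*} {f : ι → Matrix m n R} (hf : Summable f) (w : n → R) :
    (∑' i, f i) *ᵥ w = ∑' i, f i *ᵥ w :=
  hf.map_tsum (mulVec.addMonoidHomLeft w) (continuous_id.matrix_mulVec continuous_const)

theorem tsum_vecMul_pow_eq_add [DecidableEq n] {v : n → R} {A : Matrix n n R}
    (h : Summable fun k : ℕ => v ᵥ* A ^ k) :
    ∑' k : ℕ, v ᵥ* A ^ k = v + (∑' k : ℕ, v ᵥ* A ^ k) ᵥ* A := by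
  rw [tsum_vecMul h, h.tsum_eq_zero_add]
  simp [pow_succ, vecMul_vecMul]

theorem tsum_mul_pow_mulVec_eq_zero [DecidableEq n] {A B : Matrix n n R} {w : n → R}
    (hA : A *ᵥ w = w) (h : Summable fun k : ℕ => B * A ^ k) : (∑' k : ℕ, B * A ^ k) *ᵥ w = 0 := by
  have hconst : ∀ k : ℕ, (B * A ^ k) *ᵥ w = B *ᵥ w := fun k => by
    rw [← mulVec_mulVec, pow_mulVec_eq_self hA]
  have hBw : B *ᵥ w = 0 := (summable_const_iff _).1 <|
    (h.map (mulVec.addMonoidHomLeft w) (continuous_id.matrix_mulVec continuous_const)).congr hconst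
  rw [tsum_mulVec h]
  simp [hconst, hBw]

end Series

theorem vecMul_add_smul_eq_self {n R : Type*} [Fintype n] [CommRing R]
    {P₀ ΔP D : Matrix n n R} {v s : n → R} {ε : R} (hv : v ᵥ* P₀ = v)
    (hD : D = ΔP + D * P₀) (hs : s = v + s ᵥ* (ε • D)) : s ᵥ* (P₀ + ε • ΔP) = s := by
  have hDP₀ : D * P₀ = D - ΔP := eq_sub_of_add_eq' hD.symm
  calc s ᵥ* (P₀ + ε • ΔP) = s ᵥ* P₀ + ε • s ᵥ* ΔP := by rw [vecMul_add, vecMul_smul]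
    _ = (v + s ᵥ* (ε • D)) ᵥ* P₀ + ε • s ᵥ* ΔP := by rw [← hs]
    _ = v + s ᵥ* (ε • D) := by
      rw [add_vecMul, hv, vecMul_vecMul, smul_mul, hDP₀, vecMul_smul, vecMul_smul, vecMul_sub]
      module
    _ = s := hs.symm

end Matrix

theorem perturbation_expansion_stationary_measure_general
    {X : Type*} [Fintype X] [DecidableEq X]
    (P₀ P ΔP : Matrix X X ℝ) (ε : ℝ)
    (hP₀row : ∀ i, ∑ j, P₀ i j = 1)
    (hProw : ∀ i, ∑ j, P i j = 1)
    (hpert : P = P₀ + ε • ΔP)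
    (hergodic : ∃ N : ℕ, ∀ i j, 0 < (P ^ N) i j)
    (π π₀ : X → ℝ)
    (hπsum : ∑ i, π i = 1)
    (hπstat : Matrix.vecMul π P = π)
    (hπ₀sum : ∑ i, π₀ i = 1)
    (hπ₀stat : Matrix.vecMul π₀ P₀ = π₀)
    (hD : Summable (fun j : ℕ => ΔP * P₀ ^ j))
    (habs : Summable (fun k : ℕ =>
      |ε| ^ k * ‖Matrix.vecMul π₀ ((∑' j : ℕ, ΔP * P₀ ^ j) ^ k)‖)) :
    π = ∑' k : ℕ, ε ^ k • Matrix.vecMul π₀ ((∑' j : ℕ, ΔP * P₀ ^ j) ^ k) := by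
  obtain ⟨N, hN⟩ := hergodic
  set D := ∑' j : ℕ, ΔP * P₀ ^ j
  have hterm : ∀ k : ℕ, ε ^ k • π₀ ᵥ* D ^ k = π₀ ᵥ* (ε • D) ^ k := fun k => by
    rw [smul_pow, vecMul_smul]
  have hsummable : Summable fun k : ℕ => π₀ ᵥ* (ε • D) ^ k :=
    .of_norm <| habs.congr fun k => by rw [← hterm, norm_smul, norm_pow, Real.norm_eq_abs]
  simp only [hterm]
  set S := ∑' k : ℕ, π₀ ᵥ* (ε • D) ^ k
  have hS : S = π₀ + S ᵥ* (ε • D) := tsum_vecMul_pow_eq_add hsummable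
  have hD1 : D *ᵥ 1 = 0 := tsum_mul_pow_mulVec_eq_zero (mulVec_one_eq_one_iff.2 hP₀row) hD
  have hSstat : S ᵥ* P = S :=
    hpert ▸ vecMul_add_smul_eq_self hπ₀stat (tsum_mul_pow_eq_add hD) hS
  have hSsum : ∑ i, S i = 1 := by
    rw [← dotProduct_one, hS, add_dotProduct, ← dotProduct_mulVec, smul_mulVec, hD1]
    simp [dotProduct_one, hπ₀sum]
  exact eq_of_vecMul_eq_self_of_pow_pos (mulVec_one_eq_one_iff.2 hProw) hN hπstat hSstat
    (by rw [hπsum, hSsum])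

/-- Perturbation expansion of the stationary measure: if `P = P₀ + ε ΔP` is ergodic with
stationary measure `π`, `π₀` is stationary for `P₀`, `D = ∑_{j≥0} ΔP P₀^j` converges and the
series `∑_k ε^k π₀ D^k` converges absolutely, then `π = ∑_{k≥0} ε^k π₀ D^k`. -/
theorem perturbation_expansion_stationary_measure
    {X : Type*} [Fintype X] [DecidableEq X] [Nonempty X]
    (P₀ P ΔP : Matrix X X ℝ) (ε : ℝ)
    (hP₀nonneg : ∀ i j, 0 ≤ P₀ i j) (hP₀row : ∀ i, ∑ j, P₀ i j = 1)
    (hPnonneg : ∀ i j, 0 ≤ P i j) (hProw : ∀ i, ∑ j, P i j = 1)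
    (hpert : P = P₀ + ε • ΔP)
    (hergodic : ∃ N : ℕ, ∀ i j, 0 < (P ^ N) i j)
    (π π₀ : X → ℝ)
    (hπnonneg : ∀ i, 0 ≤ π i) (hπsum : ∑ i, π i = 1)
    (hπstat : Matrix.vecMul π P = π)
    (hπ₀nonneg : ∀ i, 0 ≤ π₀ i) (hπ₀sum : ∑ i, π₀ i = 1)
    (hπ₀stat : Matrix.vecMul π₀ P₀ = π₀)
    (hD : Summable (fun j : ℕ => ΔP * P₀ ^ j))
    (habs : Summable (fun k : ℕ =>
      |ε| ^ k * ‖Matrix.vecMul π₀ ((∑' j : ℕ, ΔP * P₀ ^ j) ^ k)‖)) :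
    π = ∑' k : ℕ, ε ^ k • Matrix.vecMul π₀ ((∑' j : ℕ, ΔP * P₀ ^ j) ^ k) :=
  perturbation_expansion_stationary_measure_general P₀ P ΔP ε hP₀row hProw hpert hergodic π π₀ hπsum
    hπstat hπ₀sum hπ₀stat hD habs
end
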